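/- cbrt(2 + 2√3·cos(π/18)) + cbrt(2 + 2√3·cos(11π/18)) + cbrt(2 + 2√3·cos(13π/18)) = cbrt(9). -/
import Mathlib


/-- The real cube root of a real number. -/
noncomputable def cbrt (t : ℝ) : ℝ := Real.sign t * |t| ^ ((1 : ℝ) / 3)

lemma cbrt_pow_three (t : ℝ) : (cbrt t)^3 = t := by
  unfold cbrt
  have h : (|t| ^ ((1:ℝ)/3))^(3:ℕ) = |t| := by
    rw [← Real.rpow_natCast (|t| ^ ((1:ℝ)/3)) 3, ← Real.rpow_mul (abs_nonneg t)]
    norm_num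
  rw [mul_pow, h]
  rcases lt_trichotomy t 0 with h1|h1|h1
  · rw [Real.sign_of_neg h1]; rw [abs_of_neg h1]; ring
  · simp [h1]
  · rw [Real.sign_of_pos h1]; rw [abs_of_pos h1]; ring

lemma cube_inj {x y : ℝ} (h : x^3 = y^3) : x = y :=
  (Odd.strictMono_pow (R := ℝ) (by decide)).injective h

set_option maxHeartbeats 1000000 in
theorem stmt_17 :
    cbrt (2 + 2 * Real.sqrt 3 * Real.cos (Real.pi / 18)) +
      cbrt (2 + 2 * Real.sqrt 3 * Real.cos (11 * Real.pi / 18)) +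
      cbrt (2 + 2 * Real.sqrt 3 * Real.cos (13 * Real.pi / 18)) = cbrt 9 := by
  set π := Real.pi
  set x := Real.cos (π/18) with hxdef
  set y := Real.cos (11*π/18) with hydef
  set z := Real.cos (13*π/18) with hzdef
  have hsq : Real.sqrt 3 ^ 2 = 3 := Real.sq_sqrt (by norm_num)
  -- sum of cosines is zero
  have h1 : x + y + z = 0 := by
    have e : y + z = -x := by
      rw [hydef, hzdef, Real.cos_add_cos]
      have a1 : (11*π/18 + 13*π/18)/2 = π - π/3 := by ring
      have a2 : (11*π/18 - 13*π/18)/2 = -(π/18) := by ring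
      rw [a1, a2, Real.cos_pi_sub, Real.cos_pi_div_three, Real.cos_neg, hxdef]
      ring
    linarith
  -- sum of squares is 3/2
  have h2 : x^2 + y^2 + z^2 = 3/2 := by
    have c1 : Real.cos (2*(π/18)) = 2*x^2 - 1 := by rw [Real.cos_two_mul, hxdef]
    have c2 : Real.cos (2*(11*π/18)) = 2*y^2 - 1 := by rw [Real.cos_two_mul, hydef]
    have c3 : Real.cos (2*(13*π/18)) = 2*z^2 - 1 := by rw [Real.cos_two_mul, hzdef]
    have e : Real.cos (2*(11*π/18)) + Real.cos (2*(13*π/18)) = -Real.cos (2*(π/18)) := by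
      rw [Real.cos_add_cos]
      have a1 : (2*(11*π/18) + 2*(13*π/18))/2 = π + π/3 := by ring
      have a2 : (2*(11*π/18) - 2*(13*π/18))/2 = -(2*(π/18)) := by ring
      rw [a1, a2, Real.cos_add, Real.cos_pi, Real.sin_pi, Real.cos_pi_div_three, Real.cos_neg]
      ring
    rw [c1, c2, c3] at e
    linarith
  -- triple angle values
  have h3x : 4*x^3 - 3*x = Real.sqrt 3 / 2 := by
    rw [hxdef, ← Real.cos_three_mul]
    have : 3 * (π/18) = π/6 := by ring
    rw [this, Real.cos_pi_div_six]
  have h3y : 4*y^3 - 3*y = Real.sqrt 3 / 2 := by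
    rw [hydef, ← Real.cos_three_mul]
    have : 3 * (11*π/18) = 2*π - π/6 := by ring
    rw [this, Real.cos_sub, Real.cos_two_pi, Real.sin_two_pi, Real.cos_pi_div_six]
    ring
  have h3z : 4*z^3 - 3*z = Real.sqrt 3 / 2 := by
    rw [hzdef, ← Real.cos_three_mul]
    have : 3 * (13*π/18) = 2*π + π/6 := by ring
    rw [this, Real.cos_add, Real.cos_two_pi, Real.sin_two_pi, Real.cos_pi_div_six]
    ring
  -- elementary symmetric functions of x,y,z
  have e2 : x*y + y*z + z*x = -3/4 := by nlinarith [sq_nonneg (x+y+z)]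
  have e3 : x*y*z = Real.sqrt 3 / 8 := by
    have key : x^3 + y^3 + z^3 = 3*(x*y*z) := by
      linear_combination (x^2+y^2+z^2 - x*y - y*z - z*x) * h1
    linarith [h3x, h3y, h3z, key, h1]
  -- the three numbers and their cube roots
  set a : ℝ := 2 + 2 * Real.sqrt 3 * x with hadef
  set b : ℝ := 2 + 2 * Real.sqrt 3 * y with hbdef
  set c : ℝ := 2 + 2 * Real.sqrt 3 * z with hcdef
  have hA1 : a + b + c = 6 := by
    rw [hadef, hbdef, hcdef]; linear_combination 2*Real.sqrt 3 * h1
  have hA2 : a*b + b*c + c*a = 3 := by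
    rw [hadef, hbdef, hcdef]
    linear_combination 8*Real.sqrt 3 * h1 + 4*Real.sqrt 3^2*e2 - 3*hsq
  have hA3 : a*b*c = -1 := by
    rw [hadef, hbdef, hcdef]
    linear_combination 8*Real.sqrt 3*h1 + 8*Real.sqrt 3^2*e2 + 8*Real.sqrt 3^3*e3
      + (Real.sqrt 3^2 - 3)*hsq
  set u := cbrt a with hudef
  set v := cbrt b with hvdef
  set w := cbrt c with hwdef
  have hu : u^3 = a := cbrt_pow_three a
  have hv : v^3 = b := cbrt_pow_three b
  have hw : w^3 = c := cbrt_pow_three c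
  have S1 : u^3 + v^3 + w^3 = 6 := by rw [hu, hv, hw]; exact hA1
  have S2 : u^3*v^3 + v^3*w^3 + w^3*u^3 = 3 := by rw [hu, hv, hw]; exact hA2
  have S3 : u*v*w = -1 := by
    have : (u*v*w)^3 = (-1:ℝ)^3 := by
      rw [mul_pow, mul_pow, hu, hv, hw]; rw [hA3]; norm_num
    exact cube_inj this
  set s := u + v + w with hsdef
  set p := u*v + v*w + w*u with hpdef
  have hs3 : s^3 = 9 + 3*s*p := by
    rw [hsdef, hpdef]; linear_combination S1 - 3*S3
  have hp3 : p^3 = -3*p*s := by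
    rw [hpdef, hsdef]
    linear_combination S2 + (3*(u*v+v*w+w*u)*(u+v+w) - 3*(u*v*w) + 3)*S3
  have ht : (s*p)^3 + 9*(s*p)^2 + 27*(s*p) = 0 := by
    linear_combination p^3*hs3 + (9 + 3*s*p)*hp3
  have hfact : (s*p) * ((s*p)^2 + 9*(s*p) + 27) = 0 := by linear_combination ht
  have hpos : (s*p)^2 + 9*(s*p) + 27 > 0 := by
    have hr : (s*p)^2 + 9*(s*p) + 27 = (s*p + 9/2)^2 + 27/4 := by ring
    rw [hr]; positivity
  have ht0 : s*p = 0 := by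
    rcases mul_eq_zero.mp hfact with h'|h'
    · exact h'
    · linarith
  have hp0 : p = 0 := by
    have : p^3 = 0 := by
      rw [hp3]
      rcases mul_eq_zero.mp ht0 with h'|h'
      · rw [h']; ring
      · rw [h']; ring
    exact pow_eq_zero_iff (by norm_num) |>.mp this
  have hs9 : s^3 = 9 := by rw [hs3, hp0]; ring
  have : s^3 = (cbrt 9)^3 := by rw [hs9, cbrt_pow_three]
  exact cube_inj this
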